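/- Let σ > 0, n ≥ 1, K ≥ 1, let a ∈ ℝⁿ, and let δ₁, …, δ_K be i.i.d. from the multivariate Gaussian N(0, σ²Iₙ) on ℝⁿ (expectations taken over the K-fold product measure). Consider the K-sample zeroth-order estimator for the linear function x ↦ ⟨a, x⟩, namely ĝ = (1/K) Σ_{k=1}^{K} (δ_k/σ²)·⟨a, δ_k⟩. Then E[‖ĝ − a‖²] = ((n + 1)/K)·‖a‖²; in particular the mean squared estimation error grows linearly in the parameter dimension n and decays linearly in the number of Monte Carlo samples K. -/

import Mathlib

open MeasureTheory ProbabilityTheory Real Finset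
open scoped NNReal ENNReal

section PiHelpers

variable {ι : Type*} [Fintype ι] {α : Type*} [MeasurableSpace α] {μ : Measure α} [SigmaFinite μ]

lemma pi_integrable_prod {f : ι → α → ℝ} (hf : ∀ i, Integrable (f i) μ) :
    Integrable (fun x : ι → α => ∏ i, f i (x i)) (Measure.pi fun _ => μ) := by
  letI : MeasureSpace α := ⟨μ⟩
  letI : SigmaFinite (volume : Measure α) := ‹SigmaFinite μ›
  exact Integrable.fintype_prod (f := f) hf

lemma pi_integral_prod (f : ι → α → ℝ) :
    ∫ x : ι → α, ∏ i, f i (x i) ∂(Measure.pi fun _ => μ) = ∏ i, ∫ x, f i x ∂μ := by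
  letI : MeasureSpace α := ⟨μ⟩
  letI : SigmaFinite (volume : Measure α) := ‹SigmaFinite μ›
  exact integral_fintype_prod_eq_prod f

variable [IsProbabilityMeasure μ] [DecidableEq ι]

lemma pi_integrable_eval {f : α → ℝ} (hf : Integrable f μ) (k : ι) :
    Integrable (fun x : ι → α => f (x k)) (Measure.pi fun _ => μ) := by
  have h := pi_integrable_prod (μ := μ) (f := fun m x => if m = k then f x else 1) ?_
  · refine h.congr (Filter.Eventually.of_forall fun x => ?_)
    simp [Finset.prod_ite_eq']
  · intro m
    by_cases hm : m = k <;> simp [hm, hf]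

lemma pi_integral_eval (f : α → ℝ) (k : ι) :
    ∫ x : ι → α, f (x k) ∂(Measure.pi fun _ => μ) = ∫ x, f x ∂μ := by
  have h := pi_integral_prod (μ := μ) (fun m x => if m = k then f x else 1)
  have h1 : (fun x : ι → α => ∏ m, if m = k then f (x m) else 1)
      = fun x : ι → α => f (x k) := by
    funext x; simp [Finset.prod_ite_eq']
  have h2 : ∀ m : ι, (∫ x, (if m = k then f x else 1) ∂μ) = if m = k then ∫ x, f x ∂μ else 1 := by
    intro m; by_cases hm : m = k <;> simp [hm]
  rw [h1] at h
  rw [h]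
  simp only [h2, Finset.prod_ite_eq']
  simp

lemma pi_integrable_eval_pair {f g : α → ℝ} (hf : Integrable f μ) (hg : Integrable g μ)
    (hfg : Integrable (fun x => f x * g x) μ) (k k' : ι) :
    Integrable (fun x : ι → α => f (x k) * g (x k')) (Measure.pi fun _ => μ) := by
  by_cases hkk : k = k'
  · subst hkk
    exact pi_integrable_eval hfg k
  · have h := pi_integrable_prod (μ := μ)
      (f := fun m x => (if m = k then f x else 1) * (if m = k' then g x else 1)) ?_
    · refine h.congr (Filter.Eventually.of_forall fun x => ?_)
      simp only [Finset.prod_mul_distrib, Finset.prod_ite_eq', Finset.mem_univ, if_true]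
    · intro m
      by_cases h1 : m = k <;> by_cases h2 : m = k' <;>
        simp_all [hf, hg, integrable_const]

lemma pi_integral_eval_pair {f g : α → ℝ} {k k' : ι} (hkk : k ≠ k') :
    ∫ x : ι → α, f (x k) * g (x k') ∂(Measure.pi fun _ => μ)
      = (∫ x, f x ∂μ) * ∫ x, g x ∂μ := by
  have h := pi_integral_prod (μ := μ)
    (fun m x => (if m = k then f x else 1) * (if m = k' then g x else 1))
  have h1 : (fun x : ι → α => ∏ m, ((if m = k then f (x m) else 1) * (if m = k' then g (x m) else 1)))
      = fun x : ι → α => f (x k) * g (x k') := by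
    funext x
    simp only [Finset.prod_mul_distrib, Finset.prod_ite_eq', Finset.mem_univ, if_true]
  have h2 : ∀ m : ι, (∫ x, (if m = k then f x else 1) * (if m = k' then g x else 1) ∂μ)
      = (if m = k then ∫ x, f x ∂μ else 1) * (if m = k' then ∫ x, g x ∂μ else 1) := by
    intro m
    by_cases ha : m = k <;> by_cases hb : m = k' <;> simp_all [hkk]
  rw [h1] at h
  rw [h]
  simp only [h2]
  rw [Finset.prod_mul_distrib]
  simp [Finset.prod_ite_eq']

end PiHelpers

section AvgMoment

variable {α : Type*} [MeasurableSpace α] {μ : Measure α} [IsProbabilityMeasure μ]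

lemma avg_moment {f : α → ℝ} (h1 : Integrable f μ) (h2 : Integrable (fun x => f x * f x) μ)
    {K : ℕ} (hK : 1 ≤ K) (c : ℝ) :
    Integrable (fun δs : Fin K → α => ((1 / (K : ℝ)) * ∑ k, f (δs k) - c) ^ 2)
      (Measure.pi fun _ => μ)
    ∧ ∫ δs : Fin K → α, ((1 / (K : ℝ)) * ∑ k, f (δs k) - c) ^ 2 ∂(Measure.pi fun _ => μ)
      = ((∫ x, f x ∂μ) - c) ^ 2
        + (1 / (K : ℝ)) * ((∫ x, f x * f x ∂μ) - (∫ x, f x ∂μ) ^ 2) := by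
  have hK0 : (K : ℝ) ≠ 0 := by positivity
  set m := ∫ x, f x ∂μ with hm
  set s := ∫ x, f x * f x ∂μ with hs
  set Pi := (Measure.pi fun _ : Fin K => μ) with hPi
  have hpair : ∀ k k' : Fin K, Integrable (fun δs : Fin K → α => f (δs k) * f (δs k')) Pi :=
    fun k k' => pi_integrable_eval_pair h1 h1 h2 k k'
  have hone : ∀ k : Fin K, Integrable (fun δs : Fin K → α => f (δs k)) Pi :=
    fun k => pi_integrable_eval h1 k
  have hpairI : ∀ k k' : Fin K,
      (∫ δs : Fin K → α, f (δs k) * f (δs k') ∂Pi) = if k = k' then s else m ^ 2 := by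
    intro k k'
    by_cases hkk : k = k'
    · subst hkk
      rw [if_pos rfl, hs]
      exact pi_integral_eval (fun x => f x * f x) k
    · rw [if_neg hkk, pi_integral_eval_pair hkk, hm, sq]
  have hEq : (fun δs : Fin K → α => ((1 / (K : ℝ)) * ∑ k, f (δs k) - c) ^ 2)
      = fun δs : Fin K → α =>
        (∑ k : Fin K, ∑ k' : Fin K, (1 / (K : ℝ) ^ 2) * (f (δs k) * f (δs k')))
        - (2 * c / (K : ℝ)) * ∑ k : Fin K, f (δs k) + c ^ 2 := by
    funext δs
    have hSS : (∑ k : Fin K, ∑ k' : Fin K, (1 / (K : ℝ) ^ 2) * (f (δs k) * f (δs k')))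
        = (1 / (K : ℝ) ^ 2) * ((∑ k : Fin K, f (δs k)) * (∑ k' : Fin K, f (δs k'))) := by
      rw [Finset.sum_mul_sum, Finset.mul_sum]
      exact Finset.sum_congr rfl fun k _ => (Finset.mul_sum _ _ _).symm
    rw [hSS]
    field_simp
    ring
  have hA : Integrable (fun δs : Fin K → α =>
      ∑ k : Fin K, ∑ k' : Fin K, (1 / (K : ℝ) ^ 2) * (f (δs k) * f (δs k'))) Pi :=
    integrable_finset_sum _ fun k _ => integrable_finset_sum _ fun k' _ =>
      (hpair k k').const_mul _
  have hB : Integrable (fun δs : Fin K → α =>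
      (2 * c / (K : ℝ)) * ∑ k : Fin K, f (δs k)) Pi :=
    (integrable_finset_sum _ fun k _ => hone k).const_mul _
  have hAB : Integrable (fun δs : Fin K → α =>
      (∑ k : Fin K, ∑ k' : Fin K, (1 / (K : ℝ) ^ 2) * (f (δs k) * f (δs k')))
      - (2 * c / (K : ℝ)) * ∑ k : Fin K, f (δs k)) Pi := hA.sub hB
  constructor
  · rw [hEq]
    exact hAB.add (integrable_const _)
  · rw [hEq]
    have I1 : (∫ δs : Fin K → α,
        ∑ k : Fin K, ∑ k' : Fin K, (1 / (K : ℝ) ^ 2) * (f (δs k) * f (δs k')) ∂Pi)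
        = ∑ k : Fin K, ∑ k' : Fin K, (1 / (K : ℝ) ^ 2) * (if k = k' then s else m ^ 2) := by
      rw [integral_finset_sum _ (fun k _ => integrable_finset_sum _ fun k' _ =>
        (hpair k k').const_mul _)]
      refine Finset.sum_congr rfl fun k _ => ?_
      rw [integral_finset_sum _ (fun k' _ => (hpair k k').const_mul _)]
      refine Finset.sum_congr rfl fun k' _ => ?_
      rw [integral_const_mul _ _, hpairI]
    have I2 : (∫ δs : Fin K → α, (2 * c / (K : ℝ)) * ∑ k : Fin K, f (δs k) ∂Pi)
        = (2 * c / (K : ℝ)) * ((K : ℝ) * m) := by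
      rw [integral_const_mul _ _, integral_finset_sum _ fun k _ => hone k]
      simp [hPi, pi_integral_eval f (μ := μ), hm]
    have I3 : (∑ k : Fin K, ∑ k' : Fin K, (1 / (K : ℝ) ^ 2) * (if k = k' then s else m ^ 2))
        = (K : ℝ) * ((K : ℝ) * ((1 / (K : ℝ) ^ 2) * m ^ 2)
            + (1 / (K : ℝ) ^ 2) * (s - m ^ 2)) := by
      have hinner : ∀ k : Fin K,
          (∑ k' : Fin K, (1 / (K : ℝ) ^ 2) * (if k = k' then s else m ^ 2))
            = (K : ℝ) * ((1 / (K : ℝ) ^ 2) * m ^ 2) + (1 / (K : ℝ) ^ 2) * (s - m ^ 2) := by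
        intro k
        have hpt : ∀ k' : Fin K, (1 / (K : ℝ) ^ 2) * (if k = k' then s else m ^ 2)
            = (1 / (K : ℝ) ^ 2) * m ^ 2
              + (if k = k' then (1 / (K : ℝ) ^ 2) * (s - m ^ 2) else 0) := by
          intro k'; by_cases h : k = k' <;> simp [h] <;> ring
        simp only [hpt, Finset.sum_add_distrib, Finset.sum_const, Finset.card_univ,
          Fintype.card_fin, nsmul_eq_mul, Finset.sum_ite_eq, Finset.mem_univ, if_true]
      simp only [hinner, Finset.sum_const, Finset.card_univ, Fintype.card_fin, nsmul_eq_mul]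
    rw [integral_add hAB (integrable_const _), integral_sub hA hB, I1, I2, I3, integral_const]
    simp only [measure_univ, probReal_univ, ENNReal.toReal_one, smul_eq_mul, one_mul]
    field_simp
    ring

end AvgMoment

section GaussMoments

lemma integral_even_gauss {b : ℝ} (hb : 0 < b) (k : ℕ) :
    ∫ x : ℝ, x ^ (2 * k) * Real.exp (-b * x ^ 2)
      = b ^ (-(2 * (k : ℝ) + 1) / 2) * (1 / 2) * Real.Gamma ((2 * (k : ℝ) + 1) / 2) * 2 := by
  have heven : ∀ x : ℝ, |x| ^ (2 * k) * Real.exp (-b * |x| ^ 2)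
      = x ^ (2 * k) * Real.exp (-b * x ^ 2) := by
    intro x
    simp [pow_mul, sq_abs]
  have h := integral_comp_abs (f := fun x : ℝ => x ^ (2 * k) * Real.exp (-b * x ^ 2))
  simp_rw [heven] at h
  have h2 := integral_rpow_mul_exp_neg_mul_rpow (p := 2) (q := (2 * (k : ℝ)))
    (by norm_num)
    (by have h : (0:ℝ) ≤ 2*(k:ℝ) := by positivity
        linarith) hb
  have hcast : ∀ x : ℝ, 0 < x → x ^ (2 * (k : ℝ)) * Real.exp (-b * x ^ (2 : ℝ))
      = x ^ (2 * k) * Real.exp (-b * x ^ 2) := by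
    intro x hx
    rw [show (2 * (k : ℝ)) = ((2 * k : ℕ) : ℝ) by push_cast; ring, Real.rpow_natCast,
      show (2 : ℝ) = ((2 : ℕ) : ℝ) by norm_num, Real.rpow_natCast]
  rw [setIntegral_congr_fun measurableSet_Ioi (fun x hx => hcast x hx)] at h2
  rw [h, h2]
  ring

lemma gauss_pdf_eq {σ : ℝ} (hσ : 0 < σ) :
    gaussianPDFReal 0 (σ ^ 2).toNNReal
      = fun x => (Real.sqrt (2 * π * σ ^ 2))⁻¹ * Real.exp (-(2 * σ ^ 2)⁻¹ * x ^ 2) := by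
  funext x
  simp only [gaussianPDFReal, Real.coe_toNNReal _ (sq_nonneg σ), sub_zero]
  congr 1
  field_simp

lemma gauss_integral {σ : ℝ} (hσ : 0 < σ) (f : ℝ → ℝ) :
    ∫ x, f x ∂(gaussianReal 0 (σ ^ 2).toNNReal)
      = ∫ x, gaussianPDFReal 0 (σ ^ 2).toNNReal x * f x := by
  have hv0 : (σ ^ 2).toNNReal ≠ 0 := by
    simp only [ne_eq, Real.toNNReal_eq_zero, not_le]
    positivity
  rw [gaussianReal_of_var_ne_zero _ hv0]
  have hd : gaussianPDF 0 (σ ^ 2).toNNReal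
      = fun x => ((Real.toNNReal (gaussianPDFReal 0 (σ ^ 2).toNNReal x) : ℝ≥0) : ℝ≥0∞) := rfl
  rw [hd, integral_withDensity_eq_integral_smul
    ((measurable_gaussianPDFReal _ _).real_toNNReal) f]
  congr 1; funext x
  rw [NNReal.smul_def, smul_eq_mul, Real.coe_toNNReal _ (gaussianPDFReal_nonneg _ _ _)]

lemma gauss_integrable_iff {σ : ℝ} (hσ : 0 < σ) (f : ℝ → ℝ) :
    Integrable f (gaussianReal 0 (σ ^ 2).toNNReal)
      ↔ Integrable (fun x => gaussianPDFReal 0 (σ ^ 2).toNNReal x * f x) := by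
  have hv0 : (σ ^ 2).toNNReal ≠ 0 := by
    simp only [ne_eq, Real.toNNReal_eq_zero, not_le]
    positivity
  rw [gaussianReal_of_var_ne_zero _ hv0]
  have hd : gaussianPDF 0 (σ ^ 2).toNNReal
      = fun x => ((Real.toNNReal (gaussianPDFReal 0 (σ ^ 2).toNNReal x) : ℝ≥0) : ℝ≥0∞) := rfl
  rw [hd, integrable_withDensity_iff_integrable_smul
    ((measurable_gaussianPDFReal _ _).real_toNNReal)]
  constructor <;> intro h <;>
    exact h.congr (Filter.Eventually.of_forall fun x => by
      simp [NNReal.smul_def, Real.coe_toNNReal _ (gaussianPDFReal_nonneg _ _ _)])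

lemma gauss_integrable_pow {σ : ℝ} (hσ : 0 < σ) (k : ℕ) :
    Integrable (fun x => x ^ k) (gaussianReal 0 (σ ^ 2).toNNReal) := by
  rw [gauss_integrable_iff hσ]
  have hb : 0 < (2 * σ ^ 2)⁻¹ := by positivity
  have : (fun x : ℝ => gaussianPDFReal 0 (σ ^ 2).toNNReal x * x ^ k)
      = fun x : ℝ => (Real.sqrt (2 * π * σ ^ 2))⁻¹
          * (x ^ (k : ℝ) * Real.exp (-(2 * σ ^ 2)⁻¹ * x ^ 2)) := by
    funext x
    rw [gauss_pdf_eq hσ, Real.rpow_natCast]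
    ring
  rw [this]
  exact (integrable_rpow_mul_exp_neg_mul_sq hb
    (by have h : (0:ℝ) ≤ (k:ℝ) := by positivity
        linarith)).const_mul _

lemma gauss_moment_odd {σ : ℝ} (hσ : 0 < σ) {k : ℕ} (hk : Odd k) :
    ∫ x, x ^ k ∂(gaussianReal 0 (σ ^ 2).toNNReal) = 0 := by
  rw [gauss_integral hσ]
  set F : ℝ → ℝ := fun x => gaussianPDFReal 0 (σ ^ 2).toNNReal x * x ^ k with hF
  have hneg : ∀ x, F (-x) = -F x := by
    intro x
    simp only [hF, gauss_pdf_eq hσ, neg_sq, hk.neg_pow]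
    ring
  have h1 : ∫ x, F (-x) = ∫ x, F x := integral_neg_eq_self F _
  have h2 : ∫ x, F (-x) = -∫ x, F x := by
    rw [show (fun x => F (-x)) = fun x => -F x from funext hneg, integral_neg]
  have := h1.symm.trans h2
  linarith

lemma gauss_moment_two {σ : ℝ} (hσ : 0 < σ) :
    ∫ x, x ^ 2 ∂(gaussianReal 0 (σ ^ 2).toNNReal) = σ ^ 2 := by
  have hb : 0 < (2 * σ ^ 2)⁻¹ := by positivity
  have hy : 0 < 2 * σ ^ 2 := by positivity
  rw [gauss_integral hσ]
  have hre : (fun x : ℝ => gaussianPDFReal 0 (σ ^ 2).toNNReal x * x ^ 2)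
      = fun x : ℝ => (Real.sqrt (2 * π * σ ^ 2))⁻¹
          * (x ^ (2 * 1) * Real.exp (-(2 * σ ^ 2)⁻¹ * x ^ 2)) := by
    funext x; rw [gauss_pdf_eq hσ]; norm_num; ring
  rw [hre, integral_const_mul _ _, integral_even_gauss hb 1]
  push_cast
  have hΓ : Real.Gamma ((2 * (1 : ℝ) + 1) / 2) = (1 / 2) * Real.sqrt π := by
    rw [show (2 * (1 : ℝ) + 1) / 2 = 1 / 2 + 1 by norm_num,
      Real.Gamma_add_one (by norm_num), Real.Gamma_one_half_eq]
  have hbr : ((2 * σ ^ 2)⁻¹ : ℝ) ^ (-(2 * (1 : ℝ) + 1) / 2) = (2 * σ ^ 2) * Real.sqrt (2 * σ ^ 2) := by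
    rw [Real.inv_rpow hy.le, ← Real.rpow_neg hy.le]
    rw [show -(2 * (1 : ℝ) + 1) / 2 = -(1 + 1 / 2) by norm_num, neg_neg,
      Real.rpow_add hy, Real.rpow_one, ← Real.sqrt_eq_rpow]
  rw [hΓ, hbr, show 2 * π * σ ^ 2 = π * (2 * σ ^ 2) by ring,
    Real.sqrt_mul Real.pi_pos.le]
  have h1 : Real.sqrt π ≠ 0 := ne_of_gt (Real.sqrt_pos.2 Real.pi_pos)
  have h2 : Real.sqrt (2 * σ ^ 2) ≠ 0 := ne_of_gt (Real.sqrt_pos.2 hy)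
  field_simp

lemma gauss_moment_four {σ : ℝ} (hσ : 0 < σ) :
    ∫ x, x ^ 4 ∂(gaussianReal 0 (σ ^ 2).toNNReal) = 3 * σ ^ 4 := by
  have hb : 0 < (2 * σ ^ 2)⁻¹ := by positivity
  have hy : 0 < 2 * σ ^ 2 := by positivity
  rw [gauss_integral hσ]
  have hre : (fun x : ℝ => gaussianPDFReal 0 (σ ^ 2).toNNReal x * x ^ 4)
      = fun x : ℝ => (Real.sqrt (2 * π * σ ^ 2))⁻¹
          * (x ^ (2 * 2) * Real.exp (-(2 * σ ^ 2)⁻¹ * x ^ 2)) := by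
    funext x; rw [gauss_pdf_eq hσ]; norm_num; ring
  rw [hre, integral_const_mul _ _, integral_even_gauss hb 2]
  push_cast
  have hΓ : Real.Gamma ((2 * (2 : ℝ) + 1) / 2) = (3 / 2) * ((1 / 2) * Real.sqrt π) := by
    rw [show (2 * (2 : ℝ) + 1) / 2 = 3 / 2 + 1 by norm_num,
      Real.Gamma_add_one (by norm_num),
      show (3 : ℝ) / 2 = 1 / 2 + 1 by norm_num,
      Real.Gamma_add_one (by norm_num), Real.Gamma_one_half_eq]
  have hbr : ((2 * σ ^ 2)⁻¹ : ℝ) ^ (-(2 * (2 : ℝ) + 1) / 2)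
      = (2 * σ ^ 2) ^ 2 * Real.sqrt (2 * σ ^ 2) := by
    rw [Real.inv_rpow hy.le, ← Real.rpow_neg hy.le]
    rw [show -(2 * (2 : ℝ) + 1) / 2 = -(2 + 1 / 2) by norm_num, neg_neg,
      Real.rpow_add hy, ← Real.sqrt_eq_rpow,
      show (2 : ℝ) = ((2 : ℕ) : ℝ) by norm_num, Real.rpow_natCast]
  rw [hΓ, hbr, show 2 * π * σ ^ 2 = π * (2 * σ ^ 2) by ring,
    Real.sqrt_mul Real.pi_pos.le]
  have h1 : Real.sqrt π ≠ 0 := ne_of_gt (Real.sqrt_pos.2 Real.pi_pos)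
  have h2 : Real.sqrt (2 * σ ^ 2) ≠ 0 := ne_of_gt (Real.sqrt_pos.2 hy)
  field_simp

end GaussMoments

/-- The product measure on `ℝⁿ` whose `n` coordinates are i.i.d. centered Gaussians of
variance `σ²`, i.e. the multivariate Gaussian `N(0, σ²Iₙ)`. -/
noncomputable def gaussPi (σ : ℝ) (n : ℕ) : Measure (Fin n → ℝ) :=
  Measure.pi fun _ => gaussianReal 0 (σ ^ 2).toNNReal

section VectorMoments

variable {σ : ℝ} {n : ℕ}

lemma gp_coord_prod_integrable (hσ : 0 < σ) (e : Fin n → ℕ) :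
    Integrable (fun δ : Fin n → ℝ => ∏ m, δ m ^ e m) (gaussPi σ n) := by
  unfold gaussPi
  exact pi_integrable_prod fun m => gauss_integrable_pow hσ (e m)

lemma gp_coord_prod_integral (hσ : 0 < σ) (e : Fin n → ℕ) :
    ∫ δ : Fin n → ℝ, ∏ m, δ m ^ e m ∂(gaussPi σ n)
      = ∏ m, ∫ x, x ^ e m ∂(gaussianReal 0 (σ ^ 2).toNNReal) := by
  unfold gaussPi
  exact pi_integral_prod fun m x => x ^ e m

lemma pair_repr (i j : Fin n) : (fun δ : Fin n → ℝ => δ i * δ j)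
    = fun δ => ∏ m, δ m ^ (((if m = i then 1 else 0) + (if m = j then 1 else 0) : ℕ)) := by
  funext δ
  simp only [pow_add, Finset.prod_mul_distrib, pow_ite, pow_one, pow_zero,
    Finset.prod_ite_eq', Finset.mem_univ, if_true]

lemma quad_repr (i j l : Fin n) : (fun δ : Fin n → ℝ => (δ i * δ j) * (δ i * δ l))
    = fun δ => ∏ m, δ m ^ (((if m = i then 1 else 0) + (if m = j then 1 else 0)
        + ((if m = i then 1 else 0) + (if m = l then 1 else 0)) : ℕ)) := by
  funext δ
  simp only [pow_add, Finset.prod_mul_distrib, pow_ite, pow_one, pow_zero,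
    Finset.prod_ite_eq', Finset.mem_univ, if_true]

lemma gp_integrable_pair (hσ : 0 < σ) (i j : Fin n) :
    Integrable (fun δ : Fin n → ℝ => δ i * δ j) (gaussPi σ n) := by
  rw [pair_repr]
  exact gp_coord_prod_integrable hσ _

lemma gp_integrable_quad (hσ : 0 < σ) (i j l : Fin n) :
    Integrable (fun δ : Fin n → ℝ => (δ i * δ j) * (δ i * δ l)) (gaussPi σ n) := by
  rw [quad_repr]
  exact gp_coord_prod_integrable hσ _

lemma gp_integral_pair (hσ : 0 < σ) (i j : Fin n) :
    ∫ δ : Fin n → ℝ, δ i * δ j ∂(gaussPi σ n) = if i = j then σ ^ 2 else 0 := by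
  rw [pair_repr, gp_coord_prod_integral hσ]
  by_cases hij : i = j
  · subst hij
    rw [if_pos rfl]
    have hc : ∀ m : Fin n, (∫ x, x ^ (((if m = i then 1 else 0) + (if m = i then 1 else 0) : ℕ))
        ∂(gaussianReal 0 (σ ^ 2).toNNReal)) = if m = i then σ ^ 2 else 1 := by
      intro m
      by_cases hm : m = i
      · simp only [hm, if_pos rfl]
        norm_num
        exact gauss_moment_two hσ
      · simp [hm, integral_const, measure_univ]
    rw [Finset.prod_congr rfl fun m _ => hc m]
    simp [Finset.prod_ite_eq']
  · rw [if_neg hij]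
    refine Finset.prod_eq_zero (Finset.mem_univ i) ?_
    have hji : ¬(i = j) := hij
    simp only [if_pos rfl, hji, if_neg]
    norm_num

lemma gp_integral_quad (hσ : 0 < σ) (i j l : Fin n) :
    ∫ δ : Fin n → ℝ, (δ i * δ j) * (δ i * δ l) ∂(gaussPi σ n)
      = (if j = l then σ ^ 4 else 0)
        + 2 * (if i = j then σ ^ 2 else 0) * (if i = l then σ ^ 2 else 0) := by
  have hm0 : (∫ x, x ^ (0 : ℕ) ∂(gaussianReal 0 (σ ^ 2).toNNReal)) = 1 := by
    simp [integral_const, measure_univ]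
  have hm1 : (∫ x, x ^ (1 : ℕ) ∂(gaussianReal 0 (σ ^ 2).toNNReal)) = 0 :=
    gauss_moment_odd hσ odd_one
  have hm2 : (∫ x, x ^ (2 : ℕ) ∂(gaussianReal 0 (σ ^ 2).toNNReal)) = σ ^ 2 :=
    gauss_moment_two hσ
  have hm3 : (∫ x, x ^ (3 : ℕ) ∂(gaussianReal 0 (σ ^ 2).toNNReal)) = 0 :=
    gauss_moment_odd hσ (by decide)
  have hm4 : (∫ x, x ^ (4 : ℕ) ∂(gaussianReal 0 (σ ^ 2).toNNReal)) = 3 * σ ^ 4 :=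
    gauss_moment_four hσ
  rw [quad_repr, gp_coord_prod_integral hσ]
  by_cases hij : i = j
  · subst hij
    by_cases hil : i = l
    · subst hil
      have hc : ∀ m : Fin n, (∫ x, x ^ (((if m = i then 1 else 0) + (if m = i then 1 else 0)
          + ((if m = i then 1 else 0) + (if m = i then 1 else 0)) : ℕ))
          ∂(gaussianReal 0 (σ ^ 2).toNNReal)) = if m = i then 3 * σ ^ 4 else 1 := by
        intro m
        by_cases hm : m = i
        · simp only [hm, if_pos rfl]
          norm_num
          exact hm4
        · simp [hm, hm0]
      rw [Finset.prod_congr rfl fun m _ => hc m]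
      simp only [Finset.prod_ite_eq', Finset.mem_univ, if_true, if_pos rfl]
      ring
    · refine Eq.trans (Finset.prod_eq_zero (Finset.mem_univ i) ?_) ?_
      · have : ¬(i = l) := hil
        simp only [if_pos rfl, this, if_neg]
        norm_num
        exact hm3
      · have hli : ¬(i = l) := hil
        simp [hli]
  · by_cases hil : i = l
    · subst hil
      refine Eq.trans (Finset.prod_eq_zero (Finset.mem_univ i) ?_) ?_
      · have : ¬(i = j) := hij
        simp only [if_pos rfl, this, if_neg]
        norm_num
        exact hm3
      · have hjl : ¬(j = i) := fun h => hij h.symm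
        simp [hjl, hij]
    · by_cases hjl : j = l
      · subst hjl
        have hc : ∀ m : Fin n, (∫ x, x ^ (((if m = i then 1 else 0) + (if m = j then 1 else 0)
            + ((if m = i then 1 else 0) + (if m = j then 1 else 0)) : ℕ))
            ∂(gaussianReal 0 (σ ^ 2).toNNReal))
            = (if m = i then σ ^ 2 else 1) * (if m = j then σ ^ 2 else 1) := by
          intro m
          by_cases hmi : m = i
          · simp only [hmi, if_pos rfl, if_neg hij]
            norm_num
            exact hm2
          · by_cases hmj : m = j
            · have hji : ¬(j = i) := fun h => hij h.symm
              simp only [hmj, if_pos rfl, if_neg hji]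
              norm_num
              exact hm2
            · simp [hmi, hmj, hm0]
        rw [Finset.prod_congr rfl fun m _ => hc m]
        rw [Finset.prod_mul_distrib]
        simp only [Finset.prod_ite_eq', Finset.mem_univ, if_true, if_pos rfl, hij, if_neg]
        norm_num
        ring
      · refine Eq.trans (Finset.prod_eq_zero (Finset.mem_univ j) ?_) ?_
        · have hji : ¬(j = i) := fun h => hij h.symm
          have hjl' : ¬(j = l) := hjl
          simp only [if_pos rfl, hji, hjl', if_neg]
          norm_num
        · simp [hij, hjl]

end VectorMoments

section Estimator

variable {σ : ℝ} {n : ℕ}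

lemma est_repr (σ : ℝ) (a : Fin n → ℝ) (i : Fin n) :
    (fun δ : Fin n → ℝ => (δ i / σ ^ 2) * ∑ j, a j * δ j)
      = fun δ => ∑ j, (a j / σ ^ 2) * (δ i * δ j) := by
  funext δ
  rw [Finset.mul_sum]
  exact Finset.sum_congr rfl fun j _ => by ring

lemma est_sq_repr (σ : ℝ) (a : Fin n → ℝ) (i : Fin n) :
    (fun δ : Fin n → ℝ => ((δ i / σ ^ 2) * ∑ j, a j * δ j) * ((δ i / σ ^ 2) * ∑ j, a j * δ j))
      = fun δ => ∑ j, ∑ l, (a j * a l / σ ^ 4) * ((δ i * δ j) * (δ i * δ l)) := by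
  funext δ
  have h1 := congrFun (est_repr σ a i) δ
  rw [h1, Finset.sum_mul_sum]
  exact Finset.sum_congr rfl fun j _ => Finset.sum_congr rfl fun l _ => by ring

lemma est_integrable (hσ : 0 < σ) (a : Fin n → ℝ) (i : Fin n) :
    Integrable (fun δ : Fin n → ℝ => (δ i / σ ^ 2) * ∑ j, a j * δ j) (gaussPi σ n) := by
  rw [est_repr]
  exact integrable_finset_sum _ fun j _ => (gp_integrable_pair hσ i j).const_mul _

lemma est_sq_integrable (hσ : 0 < σ) (a : Fin n → ℝ) (i : Fin n) :
    Integrable (fun δ : Fin n → ℝ =>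
      ((δ i / σ ^ 2) * ∑ j, a j * δ j) * ((δ i / σ ^ 2) * ∑ j, a j * δ j)) (gaussPi σ n) := by
  rw [est_sq_repr]
  exact integrable_finset_sum _ fun j _ => integrable_finset_sum _ fun l _ =>
    (gp_integrable_quad hσ i j l).const_mul _

lemma est_integral (hσ : 0 < σ) (a : Fin n → ℝ) (i : Fin n) :
    ∫ δ : Fin n → ℝ, (δ i / σ ^ 2) * ∑ j, a j * δ j ∂(gaussPi σ n) = a i := by
  have hσ2 : σ ^ 2 ≠ 0 := by positivity
  rw [show (fun δ : Fin n → ℝ => (δ i / σ ^ 2) * ∑ j, a j * δ j)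
    = fun δ => ∑ j, (a j / σ ^ 2) * (δ i * δ j) from est_repr σ a i]
  rw [integral_finset_sum _ fun j _ => (gp_integrable_pair hσ i j).const_mul _]
  simp only [integral_const_mul _ _, gp_integral_pair hσ]
  simp only [mul_ite, mul_zero, Finset.sum_ite_eq, Finset.mem_univ, if_true]
  field_simp

lemma est_sq_integral (hσ : 0 < σ) (a : Fin n → ℝ) (i : Fin n) :
    ∫ δ : Fin n → ℝ,
        ((δ i / σ ^ 2) * ∑ j, a j * δ j) * ((δ i / σ ^ 2) * ∑ j, a j * δ j) ∂(gaussPi σ n)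
      = (∑ j, a j ^ 2) + 2 * a i ^ 2 := by
  have hσ2 : σ ^ 2 ≠ 0 := by positivity
  have hσ4 : σ ^ 4 ≠ 0 := by positivity
  rw [est_sq_repr σ a i]
  rw [integral_finset_sum _ fun j _ => integrable_finset_sum _ fun l _ =>
    (gp_integrable_quad hσ i j l).const_mul _]
  have hterm : ∀ j l : Fin n, (∫ δ : Fin n → ℝ,
      (a j * a l / σ ^ 4) * ((δ i * δ j) * (δ i * δ l)) ∂(gaussPi σ n))
      = (if j = l then a j * a l else 0)
        + (if i = j then (if i = l then 2 * (a j * a l) else 0) else 0) := by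
    intro j l
    rw [integral_const_mul _ _, gp_integral_quad hσ]
    by_cases hjl : j = l <;> by_cases hij : i = j <;> by_cases hil : i = l <;>
      simp_all <;> field_simp <;> ring
  have hin : ∀ j : Fin n, (∑ l, ∫ δ : Fin n → ℝ,
      (a j * a l / σ ^ 4) * ((δ i * δ j) * (δ i * δ l)) ∂(gaussPi σ n))
      = a j * a j + (if i = j then 2 * (a j * a i) else 0) := by
    intro j
    rw [Finset.sum_congr rfl fun l _ => hterm j l, Finset.sum_add_distrib]
    congr 1
    · simp [Finset.sum_ite_eq]
    · by_cases hij : i = j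
      · simp [hij, Finset.sum_ite_eq]
      · simp [hij]
  have houter : ∀ j : Fin n, (∫ δ : Fin n → ℝ,
      ∑ l, (a j * a l / σ ^ 4) * ((δ i * δ j) * (δ i * δ l)) ∂(gaussPi σ n))
      = ∑ l, ∫ δ : Fin n → ℝ,
          (a j * a l / σ ^ 4) * ((δ i * δ j) * (δ i * δ l)) ∂(gaussPi σ n) :=
    fun j => integral_finset_sum _ fun l _ => (gp_integrable_quad hσ i j l).const_mul _
  rw [Finset.sum_congr rfl fun j _ => (houter j).trans (hin j), Finset.sum_add_distrib]
  simp only [Finset.sum_ite_eq, Finset.mem_univ, if_true]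
  rw [Finset.sum_congr rfl fun j _ => (sq (a j)).symm]
  ring

end Estimator

instance gaussPi_prob (σ : ℝ) (n : ℕ) : IsProbabilityMeasure (gaussPi σ n) := by
  unfold gaussPi; infer_instance

/-- **Exact MSE of the `K`-sample zeroth-order estimator for a linear loss.**
For i.i.d. `δ₁,…,δ_K ∼ N(0, σ²Iₙ)` and `ĝ = (1/K) Σ_k (δ_k/σ²)·⟨a,δ_k⟩`, one has
`E[‖ĝ − a‖²] = ((n+1)/K)·‖a‖²`: the error grows linearly in `n` and decays linearly in `K`. -/
theorem multi_sample_mse (σ : ℝ) (hσ : 0 < σ) (n : ℕ) (hn : 1 ≤ n)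
    (K : ℕ) (hK : 1 ≤ K) (a : Fin n → ℝ) :
    ∫ δs : Fin K → (Fin n → ℝ),
        ∑ i : Fin n,
          ((1 / (K : ℝ)) * ∑ k : Fin K, (δs k i / σ ^ 2) * (∑ j : Fin n, a j * δs k j)
            - a i) ^ 2
        ∂(Measure.pi fun _ : Fin K => gaussPi σ n) =
      (((n : ℝ) + 1) / (K : ℝ)) * ∑ i : Fin n, a i ^ 2 := by
  have hK0 : (K : ℝ) ≠ 0 := by positivity
  have ham : ∀ i : Fin n,
      Integrable (fun δs : Fin K → (Fin n → ℝ) =>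
        ((1 / (K : ℝ)) * ∑ k : Fin K, (δs k i / σ ^ 2) * (∑ j : Fin n, a j * δs k j)
          - a i) ^ 2) (Measure.pi fun _ : Fin K => gaussPi σ n)
      ∧ (∫ δs : Fin K → (Fin n → ℝ),
          ((1 / (K : ℝ)) * ∑ k : Fin K, (δs k i / σ ^ 2) * (∑ j : Fin n, a j * δs k j)
            - a i) ^ 2 ∂(Measure.pi fun _ : Fin K => gaussPi σ n))
        = ((∫ δ : Fin n → ℝ, (δ i / σ ^ 2) * ∑ j, a j * δ j ∂(gaussPi σ n)) - a i) ^ 2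
          + (1 / (K : ℝ))
            * ((∫ δ : Fin n → ℝ, ((δ i / σ ^ 2) * ∑ j, a j * δ j)
                  * ((δ i / σ ^ 2) * ∑ j, a j * δ j) ∂(gaussPi σ n))
              - (∫ δ : Fin n → ℝ, (δ i / σ ^ 2) * ∑ j, a j * δ j ∂(gaussPi σ n)) ^ 2) :=
    fun i => avg_moment (est_integrable hσ a i) (est_sq_integrable hσ a i) hK (a i)
  rw [integral_finset_sum _ fun i _ => (ham i).1]
  have hval : ∀ i : Fin n,
      (∫ δs : Fin K → (Fin n → ℝ),
          ((1 / (K : ℝ)) * ∑ k : Fin K, (δs k i / σ ^ 2) * (∑ j : Fin n, a j * δs k j)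
            - a i) ^ 2 ∂(Measure.pi fun _ : Fin K => gaussPi σ n))
        = (1 / (K : ℝ)) * ((∑ j, a j ^ 2) + a i ^ 2) := by
    intro i
    rw [(ham i).2, est_integral hσ a i, est_sq_integral hσ a i]
    ring
  rw [Finset.sum_congr rfl fun i _ => hval i, ← Finset.mul_sum, Finset.sum_add_distrib,
    Finset.sum_const, Finset.card_univ, Fintype.card_fin, nsmul_eq_mul]
  field_simp
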